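/- arXiv:1406.1805 — 6 statements merged into one kernel-verified Lean document; each statement's English description precedes it below -/
import Mathlib

section
/- Let ν be a probability measure on a finite set S, μ another probability measure on S with density f with respect to ν, and m a median of f with respect to ν. Then ∫|f - m| dν ≤ ‖μ - ν‖_tv ≤ 2∫|f - m| dν, where ‖μ - ν‖_tv = ∑_{x∈S} |μ(x) - ν(x)|. -/
/-!
The median minimises `c ↦ ∫ |f - c| dν`, which gives the lower bound with `c = 1`, since
`‖μ - ν‖_tv = ∫ |f - 1| dν`. For the upper bound, `∫ |f - 1| dν ≤ ∫ |f - m| dν + |m - 1|`, and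
`|m - 1| = |∫ (m - f) dν| ≤ ∫ |f - m| dν` because `∫ f dν = 1`.
-/

open Finset

section

variable {S : Type*} [Fintype S] {ν : S → ℝ}

/-- Moving `c` upwards from `m` increases `|f - c|` by `c - m` where `f ≤ m` and decreases it by at
most `c - m` elsewhere; the sum cannot decrease when `{f ≤ m}` outweighs its complement. -/
theorem sum_abs_sub_mul_le_of_le (hν : ∀ x, 0 ≤ ν x) {f : S → ℝ} {m c : ℝ} (hmc : m ≤ c)
    (hm : ∑ x ∈ univ.filter (fun x => ¬ f x ≤ m), ν x ≤
      ∑ x ∈ univ.filter (fun x => f x ≤ m), ν x) :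
    ∑ x, |f x - m| * ν x ≤ ∑ x, |f x - c| * ν x := by
  have hpoint : ∀ x, (c - m) * (if f x ≤ m then ν x else -ν x) ≤
      |f x - c| * ν x - |f x - m| * ν x := by
    intro x
    split_ifs with hx
    · rw [abs_of_nonpos (by linarith), abs_of_nonpos (by linarith)]
      linarith
    · have := abs_sub_le (f x) c m
      rw [abs_of_nonneg (sub_nonneg.2 hmc)] at this
      nlinarith [hν x]
  have hsign : 0 ≤ ∑ x, (if f x ≤ m then ν x else -ν x) := by
    rw [sum_ite, sum_neg_distrib]
    linarith
  have := sum_le_sum fun x (_ : x ∈ univ) => hpoint x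
  rw [← mul_sum, sum_sub_distrib] at this
  nlinarith [mul_nonneg (sub_nonneg.2 hmc) hsign]

theorem sum_abs_sub_median_mul_le (hν : ∀ x, 0 ≤ ν x) (hν1 : ∑ x, ν x = 1) {f : S → ℝ} {m : ℝ}
    (hm1 : (1 : ℝ) / 2 ≤ ∑ x ∈ univ.filter (fun x => f x ≤ m), ν x)
    (hm2 : (1 : ℝ) / 2 ≤ ∑ x ∈ univ.filter (fun x => m ≤ f x), ν x) (c : ℝ) :
    ∑ x, |f x - m| * ν x ≤ ∑ x, |f x - c| * ν x := by
  rcases le_total m c with hmc | hcm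
  · refine sum_abs_sub_mul_le_of_le hν hmc ?_
    linarith [sum_filter_add_sum_filter_not univ (fun x => f x ≤ m) ν]
  · have hneg := sum_abs_sub_mul_le_of_le hν (f := fun x => -f x) (neg_le_neg hcm) ?_
    · simpa only [← neg_add', abs_neg, sub_neg_eq_add, neg_add_eq_sub, abs_sub_comm] using hneg
    · simp only [neg_le_neg_iff]
      linarith [sum_filter_add_sum_filter_not univ (fun x => m ≤ f x) ν]

theorem sum_abs_sub_one_mul_le_two_mul (hν : ∀ x, 0 ≤ ν x) (hν1 : ∑ x, ν x = 1) {f : S → ℝ}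
    (hf1 : ∑ x, f x * ν x = 1) (c : ℝ) :
    ∑ x, |f x - 1| * ν x ≤ 2 * ∑ x, |f x - c| * ν x := by
  have hmean : |c - 1| ≤ ∑ x, |f x - c| * ν x := by
    have : c - 1 = ∑ x, (c - f x) * ν x := by
      simp only [sub_mul, sum_sub_distrib, ← mul_sum, hν1, hf1, mul_one]
    rw [this]
    refine (abs_sum_le_sum_abs _ _).trans_eq (sum_congr rfl fun x _ => ?_)
    rw [abs_mul, abs_of_nonneg (hν x), abs_sub_comm]
  have htriangle : ∑ x, |f x - 1| * ν x ≤ ∑ x, |f x - c| * ν x + |c - 1| := by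
    calc ∑ x, |f x - 1| * ν x ≤ ∑ x, (|f x - c| + |c - 1|) * ν x :=
          sum_le_sum fun x _ => mul_le_mul_of_nonneg_right (abs_sub_le _ _ _) (hν x)
      _ = ∑ x, |f x - c| * ν x + |c - 1| := by
          simp only [add_mul, sum_add_distrib, ← mul_sum, hν1, mul_one]
  linarith
end

theorem tv_median_bounds_general {S : Type*} [Fintype S]
    (ν : S → ℝ) (hν0 : ∀ x, 0 < ν x) (hν1 : ∑ x, ν x = 1)
    (μ : S → ℝ) (hμ1 : ∑ x, μ x = 1)
    (f : S → ℝ) (hf : ∀ x, μ x = f x * ν x) (m : ℝ)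
    (hm1 : (1 : ℝ) / 2 ≤ ∑ x ∈ Finset.univ.filter (fun x => f x ≤ m), ν x)
    (hm2 : (1 : ℝ) / 2 ≤ ∑ x ∈ Finset.univ.filter (fun x => m ≤ f x), ν x) :
    (∑ x, |f x - m| * ν x) ≤ (∑ x, |μ x - ν x|) ∧
      (∑ x, |μ x - ν x|) ≤ 2 * ∑ x, |f x - m| * ν x := by
  have hν : ∀ x, 0 ≤ ν x := fun x => (hν0 x).le
  have htv : ∑ x, |μ x - ν x| = ∑ x, |f x - 1| * ν x := sum_congr rfl fun x _ => by
    rw [hf, ← sub_one_mul, abs_mul, abs_of_nonneg (hν x)]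
  have hf1 : ∑ x, f x * ν x = 1 := by simpa only [hf] using hμ1
  rw [htv]
  exact ⟨sum_abs_sub_median_mul_le hν hν1 hm1 hm2 1,
    sum_abs_sub_one_mul_le_two_mul hν hν1 hf1 m⟩

/-- For probability measures μ, ν on a finite set S with ν charging all points,
f the density of μ with respect to ν, and m a median of f with respect to ν,
∫|f - m| dν ≤ ‖μ - ν‖_tv ≤ 2 ∫|f - m| dν. -/
theorem tv_median_bounds {S : Type*} [Fintype S]
    (ν : S → ℝ) (hν0 : ∀ x, 0 < ν x) (hν1 : ∑ x, ν x = 1)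
    (μ : S → ℝ) (hμ0 : ∀ x, 0 ≤ μ x) (hμ1 : ∑ x, μ x = 1)
    (f : S → ℝ) (hf : ∀ x, μ x = f x * ν x) (m : ℝ)
    (hm1 : (1 : ℝ) / 2 ≤ ∑ x ∈ Finset.univ.filter (fun x => f x ≤ m), ν x)
    (hm2 : (1 : ℝ) / 2 ≤ ∑ x ∈ Finset.univ.filter (fun x => m ≤ f x), ν x) :
    (∑ x, |f x - m| * ν x) ≤ (∑ x, |μ x - ν x|) ∧
      (∑ x, |μ x - ν x|) ≤ 2 * ∑ x, |f x - m| * ν x :=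
  tv_median_bounds_general ν hν0 hν1 μ hμ1 f hf m hm1 hm2
end

section
/- Let S be a finite set, μ̃, ν̃ probability measures on S with ν̃ charging all points, and ψ : S → (0,∞). Define μ := (ψ/Z_μ̃)·μ̃ with Z_μ̃ = μ̃[ψ] and ν := (ψ/Z_ν̃)·ν̃ with Z_ν̃ = ν̃[ψ]. Then (ψ_∧/(2ψ_∨)) ‖μ̃ - ν̃‖_tv ≤ ‖μ - ν‖_tv ≤ 2(ψ_∨/ψ_∧) ‖μ̃ - ν̃‖_tv. -/
lemma tv_tilting_upper {S : Type*} [Fintype S] [Nonempty S]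
    (μt νt : S → ℝ) (hμt0 : ∀ x, 0 ≤ μt x) (hμt1 : ∑ x, μt x = 1)
    (hνt0 : ∀ x, 0 ≤ νt x) (hνt1 : ∑ x, νt x = 1)
    (ψ : S → ℝ) (hψ : ∀ x, 0 < ψ x)
    (μ ν : S → ℝ)
    (hμ : ∀ x, μ x = ψ x * μt x / (∑ y, ψ y * μt y))
    (hν : ∀ x, ν x = ψ x * νt x / (∑ y, ψ y * νt y)) :
    (∑ x, |μ x - ν x|) ≤ 2 * ((⨆ x, ψ x) / (⨅ x, ψ x)) * (∑ x, |μt x - νt x|) := by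
  set a := ⨅ x, ψ x with ha_def
  set b := ⨆ x, ψ x with hb_def
  obtain ⟨x0, hx0⟩ := Finite.exists_min ψ
  have ha_le : ∀ x, a ≤ ψ x := fun x => ciInf_le (Finite.bddBelow_range ψ) x
  have hb_ge : ∀ x, ψ x ≤ b := fun x => le_ciSup (Finite.bddAbove_range ψ) x
  have ha0 : 0 < a := lt_of_lt_of_le (hψ x0) (le_ciInf hx0)
  have hb0 : 0 < b := lt_of_lt_of_le ha0 ((ha_le x0).trans (hb_ge x0))
  set Zμ := ∑ y, ψ y * μt y with hZμ_def
  set Zν := ∑ y, ψ y * νt y with hZν_def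
  have hZμa : a ≤ Zμ := by
    calc a = ∑ y, a * μt y := by rw [← Finset.mul_sum, hμt1, mul_one]
    _ ≤ ∑ y, ψ y * μt y :=
        Finset.sum_le_sum fun y _ => mul_le_mul_of_nonneg_right (ha_le y) (hμt0 y)
  have hZνa : a ≤ Zν := by
    calc a = ∑ y, a * νt y := by rw [← Finset.mul_sum, hνt1, mul_one]
    _ ≤ ∑ y, ψ y * νt y :=
        Finset.sum_le_sum fun y _ => mul_le_mul_of_nonneg_right (ha_le y) (hνt0 y)
  have hZμ0 : 0 < Zμ := lt_of_lt_of_le ha0 hZμa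
  have hZν0 : 0 < Zν := lt_of_lt_of_le ha0 hZνa
  have key : ∀ x, |μ x - ν x| ≤
      ψ x * |μt x - νt x| / Zμ + ψ x * νt x * |Zν - Zμ| / (Zμ * Zν) := by
    intro x
    rw [hμ x, hν x]
    have hrw : ψ x * μt x / Zμ - ψ x * νt x / Zν =
        ψ x * (μt x - νt x) / Zμ + ψ x * νt x * (Zν - Zμ) / (Zμ * Zν) := by
      field_simp
      ring
    rw [hrw]
    refine (abs_add_le _ _).trans (le_of_eq ?_)
    rw [abs_div, abs_div, abs_mul, abs_mul, abs_mul, abs_of_pos (hψ x),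
      abs_of_nonneg (hνt0 x), abs_of_pos hZμ0, abs_of_pos (mul_pos hZμ0 hZν0)]
  have hZdiff : |Zν - Zμ| ≤ ∑ x, ψ x * |μt x - νt x| := by
    have : Zν - Zμ = ∑ x, ψ x * (νt x - μt x) := by
      rw [hZν_def, hZμ_def, ← Finset.sum_sub_distrib]
      congr 1; ext x; ring
    rw [this]
    refine (Finset.abs_sum_le_sum_abs _ _).trans (le_of_eq ?_)
    congr 1; ext x
    rw [abs_mul, abs_of_pos (hψ x), abs_sub_comm]
  have hψsum : ∑ x, ψ x * |μt x - νt x| ≤ b * ∑ x, |μt x - νt x| := by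
    rw [Finset.mul_sum]
    exact Finset.sum_le_sum fun x _ => mul_le_mul_of_nonneg_right (hb_ge x) (abs_nonneg _)
  calc (∑ x, |μ x - ν x|)
      ≤ ∑ x, (ψ x * |μt x - νt x| / Zμ + ψ x * νt x * |Zν - Zμ| / (Zμ * Zν)) :=
        Finset.sum_le_sum fun x _ => key x
    _ = (∑ x, ψ x * |μt x - νt x|) / Zμ + |Zν - Zμ| / Zμ := by
        rw [Finset.sum_add_distrib, ← Finset.sum_div]
        congr 1
        have hterm : ∀ x : S, ψ x * νt x * |Zν - Zμ| / (Zμ * Zν) =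
            ψ x * νt x * (|Zν - Zμ| / (Zμ * Zν)) := fun x => by ring
        simp only [hterm]
        rw [← Finset.sum_mul, ← hZν_def, ← mul_div_assoc, mul_comm Zν |Zν - Zμ|,
          mul_div_mul_right _ _ hZν0.ne']
    _ ≤ (b * ∑ x, |μt x - νt x|) / Zμ + (b * ∑ x, |μt x - νt x|) / Zμ := by
        gcongr
        exact hZdiff.trans hψsum
    _ = 2 * (b * ∑ x, |μt x - νt x|) / Zμ := by ring
    _ ≤ 2 * (b * ∑ x, |μt x - νt x|) / a :=
        div_le_div_of_nonneg_left
          (mul_nonneg (by norm_num)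
            (mul_nonneg hb0.le (Finset.sum_nonneg fun x _ => abs_nonneg _)))
          ha0 hZμa
    _ = 2 * (b / a) * ∑ x, |μt x - νt x| := by ring

/-- Tilting two probability measures μ̃, ν̃ on a finite set by a positive function ψ,
the total variation distances of the tilted measures μ, ν compare with that of μ̃, ν̃:
(ψ_∧/(2ψ_∨)) ‖μ̃ - ν̃‖_tv ≤ ‖μ - ν‖_tv ≤ 2 (ψ_∨/ψ_∧) ‖μ̃ - ν̃‖_tv. -/
theorem tv_tilting_comparison {S : Type*} [Fintype S] [Nonempty S]
    (μt νt : S → ℝ) (hμt0 : ∀ x, 0 ≤ μt x) (hμt1 : ∑ x, μt x = 1)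
    (hνt0 : ∀ x, 0 < νt x) (hνt1 : ∑ x, νt x = 1)
    (ψ : S → ℝ) (hψ : ∀ x, 0 < ψ x)
    (μ ν : S → ℝ)
    (hμ : ∀ x, μ x = ψ x * μt x / (∑ y, ψ y * μt y))
    (hν : ∀ x, ν x = ψ x * νt x / (∑ y, ψ y * νt y)) :
    ((⨅ x, ψ x) / (2 * ⨆ x, ψ x)) * (∑ x, |μt x - νt x|) ≤ (∑ x, |μ x - ν x|) ∧
      (∑ x, |μ x - ν x|) ≤ 2 * ((⨆ x, ψ x) / (⨅ x, ψ x)) * (∑ x, |μt x - νt x|) := by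
  obtain ⟨x0, hx0⟩ := Finite.exists_min ψ
  obtain ⟨x1, hx1⟩ := Finite.exists_max ψ
  have ha_le : ∀ x, (⨅ x, ψ x) ≤ ψ x := fun x => ciInf_le (Finite.bddBelow_range ψ) x
  have hb_ge : ∀ x, ψ x ≤ (⨆ x, ψ x) := fun x => le_ciSup (Finite.bddAbove_range ψ) x
  have ha0 : 0 < ⨅ x, ψ x := lt_of_lt_of_le (hψ x0) (le_ciInf hx0)
  have hb0 : 0 < ⨆ x, ψ x := lt_of_lt_of_le ha0 ((ha_le x0).trans (hb_ge x0))
  set Zμ := ∑ y, ψ y * μt y with hZμ_def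
  set Zν := ∑ y, ψ y * νt y with hZν_def
  have hZμa : (⨅ x, ψ x) ≤ Zμ := by
    calc (⨅ x, ψ x) = ∑ y, (⨅ x, ψ x) * μt y := by rw [← Finset.mul_sum, hμt1, mul_one]
    _ ≤ ∑ y, ψ y * μt y :=
        Finset.sum_le_sum fun y _ => mul_le_mul_of_nonneg_right (ha_le y) (hμt0 y)
  have hZνa : (⨅ x, ψ x) ≤ Zν := by
    calc (⨅ x, ψ x) = ∑ y, (⨅ x, ψ x) * νt y := by rw [← Finset.mul_sum, hνt1, mul_one]
    _ ≤ ∑ y, ψ y * νt y :=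
        Finset.sum_le_sum fun y _ => mul_le_mul_of_nonneg_right (ha_le y) (hνt0 y).le
  have hZμ0 : 0 < Zμ := lt_of_lt_of_le ha0 hZμa
  have hZν0 : 0 < Zν := lt_of_lt_of_le ha0 hZνa
  constructor
  · -- lower bound: apply the upper bound with roles swapped, tilting by ψ⁻¹
    have hμ0 : ∀ x, 0 ≤ μ x := fun x => by
      rw [hμ x]
      exact div_nonneg (mul_nonneg (hψ x).le (hμt0 x)) hZμ0.le
    have hν0 : ∀ x, 0 ≤ ν x := fun x => by
      rw [hν x]
      exact div_nonneg (mul_nonneg (hψ x).le (hνt0 x).le) hZν0.le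
    have hμ1 : ∑ x, μ x = 1 := by
      simp only [hμ]
      rw [← Finset.sum_div, div_self hZμ0.ne']
    have hν1 : ∑ x, ν x = 1 := by
      simp only [hν]
      rw [← Finset.sum_div, div_self hZν0.ne']
    have hsμ : ∑ y, (ψ y)⁻¹ * μ y = Zμ⁻¹ := by
      have : ∀ y, (ψ y)⁻¹ * μ y = μt y / Zμ := by
        intro y
        rw [hμ y, ← mul_div_assoc, ← mul_assoc, inv_mul_cancel₀ (hψ y).ne', one_mul]
      simp only [this]
      rw [← Finset.sum_div, hμt1, one_div]
    have hsν : ∑ y, (ψ y)⁻¹ * ν y = Zν⁻¹ := by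
      have : ∀ y, (ψ y)⁻¹ * ν y = νt y / Zν := by
        intro y
        rw [hν y, ← mul_div_assoc, ← mul_assoc, inv_mul_cancel₀ (hψ y).ne', one_mul]
      simp only [this]
      rw [← Finset.sum_div, hνt1, one_div]
    have hμ' : ∀ x, μt x = (ψ x)⁻¹ * μ x / (∑ y, (ψ y)⁻¹ * μ y) := by
      intro x
      have hinv : (ψ x)⁻¹ * μ x = μt x / Zμ := by
        rw [hμ x, ← mul_div_assoc, ← mul_assoc, inv_mul_cancel₀ (hψ x).ne', one_mul]
      rw [hsμ, hinv, div_eq_mul_inv, inv_inv, div_mul_cancel₀ _ hZμ0.ne']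
    have hν' : ∀ x, νt x = (ψ x)⁻¹ * ν x / (∑ y, (ψ y)⁻¹ * ν y) := by
      intro x
      have hinv : (ψ x)⁻¹ * ν x = νt x / Zν := by
        rw [hν x, ← mul_div_assoc, ← mul_assoc, inv_mul_cancel₀ (hψ x).ne', one_mul]
      rw [hsν, hinv, div_eq_mul_inv, inv_inv, div_mul_cancel₀ _ hZν0.ne']
    have hbnd := tv_tilting_upper μ ν hμ0 hμ1 hν0 hν1 (fun x => (ψ x)⁻¹)
      (fun x => inv_pos.mpr (hψ x)) μt νt hμ' hν'
    have hsup_inv : (⨆ x, (ψ x)⁻¹) = (⨅ x, ψ x)⁻¹ := by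
      have hinf : (⨅ x, ψ x) = ψ x0 :=
        le_antisymm (ciInf_le (Finite.bddBelow_range ψ) x0) (le_ciInf hx0)
      rw [hinf]
      refine le_antisymm (ciSup_le fun y => ?_)
        (le_ciSup (f := fun x => (ψ x)⁻¹) (Finite.bddAbove_range _) x0)
      exact inv_anti₀ (hψ x0) (hx0 y)
    have hinf_inv : (⨅ x, (ψ x)⁻¹) = (⨆ x, ψ x)⁻¹ := by
      have hsup : (⨆ x, ψ x) = ψ x1 :=
        le_antisymm (ciSup_le hx1) (le_ciSup (Finite.bddAbove_range ψ) x1)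
      rw [hsup]
      refine le_antisymm (ciInf_le (f := fun x => (ψ x)⁻¹) (Finite.bddBelow_range _) x1)
        (le_ciInf fun y => ?_)
      exact inv_anti₀ (hψ y) (hx1 y)
    rw [hsup_inv, hinf_inv] at hbnd
    have h2 : 2 * ((⨅ x, ψ x)⁻¹ / (⨆ x, ψ x)⁻¹) = 2 * ((⨆ x, ψ x) / (⨅ x, ψ x)) := by
      field_simp
    rw [h2] at hbnd
    calc ((⨅ x, ψ x) / (2 * ⨆ x, ψ x)) * (∑ x, |μt x - νt x|)
        ≤ ((⨅ x, ψ x) / (2 * ⨆ x, ψ x)) *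
            (2 * ((⨆ x, ψ x) / (⨅ x, ψ x)) * ∑ x, |μ x - ν x|) :=
          mul_le_mul_of_nonneg_left hbnd (by positivity)
      _ = ∑ x, |μ x - ν x| := by
          rw [show ((⨅ x, ψ x) / (2 * ⨆ x, ψ x)) *
              (2 * ((⨆ x, ψ x) / (⨅ x, ψ x)) * ∑ x, |μ x - ν x|) =
              ((⨅ x, ψ x) / (⨅ x, ψ x)) * (((⨆ x, ψ x) / (⨆ x, ψ x)) *
                ∑ x, |μ x - ν x|) from by ring]
          rw [div_self ha0.ne', div_self hb0.ne', one_mul, one_mul]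
  · exact tv_tilting_upper μt νt hμt0 hμt1 (fun x => (hνt0 x).le) hνt1 ψ hψ μ ν hμ hν
end

section
/- Let S be a finite set, ν̃ a probability measure on S charging all points, ψ : S → (0,∞), and f̃ : S → ℝ a probability density with respect to ν̃ (ν̃[f̃]=1). Let ν := (ψ/ν̃[ψ])·ν̃, μ̃ := f̃·ν̃ and μ := (ψ/μ̃[ψ])·μ̃ with density f with respect to ν. Then the ν-variance inequality Var_ν(f) ≤ (ψ_∨/ψ_∧)² Var_{ν̃}(f̃) holds, where Var denotes variance of the density with respect to the indicated measure. -/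
/-!
A variance is the least mean square deviation from a constant, so `Var_ν(f) ≤ ν[(f - c)²]` for
every `c`. Choosing `c = ν̃[ψ] / ν̃[ψ f̃]` turns `f - c` into a multiple of `f̃ - 1`, and the
resulting weight `ν̃[ψ] ψ / ν̃[ψ f̃]²` relative to `ν̃` is at most `(ψ_∨ / ψ_∧)²`, because both
averages `ν̃[ψ]` and `ν̃[ψ f̃]` of `ψ` lie between `ψ_∧` and `ψ_∨`.
-/

open Finset

section WeightedSums

variable {ι : Type*} [Fintype ι]

theorem sum_sq_sub_mul_eq_add (w g : ι → ℝ) (hw : ∑ i, w i = 1) (c : ℝ) :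
    ∑ i, (g i - c) ^ 2 * w i =
      ∑ i, (g i - ∑ j, g j * w j) ^ 2 * w i + (∑ j, g j * w j - c) ^ 2 := by
  set a := ∑ j, g j * w j
  have hsplit : ∀ i, (g i - c) ^ 2 * w i =
      (g i - a) ^ 2 * w i + 2 * (a - c) * (g i * w i) + (c ^ 2 - a ^ 2) * w i :=
    fun i => by ring
  simp only [hsplit, sum_add_distrib, ← mul_sum, hw]
  ring

theorem sum_sq_sub_mean_mul_le (w g : ι → ℝ) (hw : ∑ i, w i = 1) (c : ℝ) :
    ∑ i, (g i - ∑ j, g j * w j) ^ 2 * w i ≤ ∑ i, (g i - c) ^ 2 * w i := by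
  rw [sum_sq_sub_mul_eq_add w g hw c]
  exact le_add_of_nonneg_right (sq_nonneg _)

theorem sum_mul_le_iSup (w g : ι → ℝ) (hw0 : ∀ i, 0 ≤ w i) (hw1 : ∑ i, w i = 1) :
    ∑ i, g i * w i ≤ ⨆ i, g i :=
  calc ∑ i, g i * w i ≤ ∑ i, (⨆ j, g j) * w i :=
        sum_le_sum fun i _ =>
          mul_le_mul_of_nonneg_right (le_ciSup (Finite.bddAbove_range g) i) (hw0 i)
    _ = ⨆ i, g i := by rw [← mul_sum, hw1, mul_one]

theorem iInf_le_sum_mul (w g : ι → ℝ) (hw0 : ∀ i, 0 ≤ w i) (hw1 : ∑ i, w i = 1) :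
    ⨅ i, g i ≤ ∑ i, g i * w i :=
  calc ⨅ i, g i = ∑ i, (⨅ j, g j) * w i := by rw [← mul_sum, hw1, mul_one]
    _ ≤ ∑ i, g i * w i :=
        sum_le_sum fun i _ =>
          mul_le_mul_of_nonneg_right (ciInf_le (Finite.bddBelow_range g) i) (hw0 i)

end WeightedSums

theorem mul_div_sq_le_div_sq {Z W x M m : ℝ} (hm : 0 < m) (hmW : m ≤ W) (hZ : 0 ≤ Z)
    (hZM : Z ≤ M) (hx : 0 ≤ x) (hxM : x ≤ M) : Z * x / W ^ 2 ≤ (M / m) ^ 2 := by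
  rw [div_pow, sq M]
  exact div_le_div₀ (mul_self_nonneg M) (mul_le_mul hZM hxM hx (hZ.trans hZM)) (by positivity)
    (pow_le_pow_left₀ hm.le hmW 2)

theorem variance_tilting_comparison_general {S : Type*} [Fintype S]
    (νt : S → ℝ) (hνt0 : ∀ x, 0 < νt x) (hνt1 : ∑ x, νt x = 1)
    (ψ : S → ℝ) (hψ : ∀ x, 0 < ψ x)
    (ft : S → ℝ) (hft0 : ∀ x, 0 ≤ ft x) (hft1 : ∑ x, ft x * νt x = 1)
    (ν : S → ℝ) (hν : ∀ x, ν x = ψ x * νt x / (∑ y, ψ y * νt y))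
    (f : S → ℝ)
    (hf : ∀ x, f x = (∑ y, ψ y * νt y) / (∑ y, ψ y * ft y * νt y) * ft x) :
    (∑ x, (f x - ∑ y, f y * ν y) ^ 2 * ν x) ≤
      ((⨆ x, ψ x) / (⨅ x, ψ x)) ^ 2 * ∑ x, (ft x - ∑ y, ft y * νt y) ^ 2 * νt x := by
  set Z := ∑ y, ψ y * νt y
  set W := ∑ y, ψ y * ft y * νt y
  have : Nonempty S := by
    by_contra h
    simp [not_nonempty_iff.mp h] at hνt1
  have hZ : 0 < Z := sum_pos (fun x _ => mul_pos (hψ x) (hνt0 x)) univ_nonempty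
  have hm : 0 < ⨅ x, ψ x := by
    obtain ⟨x, hx⟩ := exists_eq_ciInf_of_finite (f := ψ)
    exact hx ▸ hψ x
  have hmW : ⨅ x, ψ x ≤ W := by
    refine (iInf_le_sum_mul _ ψ (fun x => mul_nonneg (hft0 x) (hνt0 x).le) hft1).trans_eq ?_
    simp only [W, mul_assoc]
  have hZM : Z ≤ ⨆ x, ψ x := sum_mul_le_iSup νt ψ (fun x => (hνt0 x).le) hνt1
  have hW : 0 < W := hm.trans_le hmW
  have hν1 : ∑ x, ν x = 1 := by
    rw [sum_congr rfl fun x _ => hν x, ← sum_div, div_self hZ.ne']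
  have hdev : ∀ x, (f x - Z / W) ^ 2 * ν x = Z * ψ x / W ^ 2 * ((ft x - 1) ^ 2 * νt x) := by
    intro x
    rw [hf x, hν x]
    field_simp
  rw [hft1, mul_sum]
  calc ∑ x, (f x - ∑ y, f y * ν y) ^ 2 * ν x ≤ ∑ x, (f x - Z / W) ^ 2 * ν x :=
        sum_sq_sub_mean_mul_le ν f hν1 _
    _ ≤ _ := by
        simp only [hdev]
        refine sum_le_sum fun x _ => mul_le_mul_of_nonneg_right ?_
          (mul_nonneg (sq_nonneg _) (hνt0 x).le)
        exact mul_div_sq_le_div_sq hm hmW hZ.le hZM (hψ x).le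
          (le_ciSup (Finite.bddAbove_range ψ) x)

/-- Variance comparison under ψ-tilting: if f̃ is a probability density w.r.t. ν̃,
ν is the ψ-tilt of ν̃ and f is the density (w.r.t. ν) of the ψ-tilt of μ̃ = f̃·ν̃,
then Var_ν(f) ≤ (ψ_∨/ψ_∧)² Var_{ν̃}(f̃). -/
theorem variance_tilting_comparison {S : Type*} [Fintype S] [Nonempty S]
    (νt : S → ℝ) (hνt0 : ∀ x, 0 < νt x) (hνt1 : ∑ x, νt x = 1)
    (ψ : S → ℝ) (hψ : ∀ x, 0 < ψ x)
    (ft : S → ℝ) (hft0 : ∀ x, 0 ≤ ft x) (hft1 : ∑ x, ft x * νt x = 1)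
    (ν : S → ℝ) (hν : ∀ x, ν x = ψ x * νt x / (∑ y, ψ y * νt y))
    (f : S → ℝ)
    (hf : ∀ x, f x = (∑ y, ψ y * νt y) / (∑ y, ψ y * ft y * νt y) * ft x) :
    (∑ x, (f x - ∑ y, f y * ν y) ^ 2 * ν x) ≤
      ((⨆ x, ψ x) / (⨅ x, ψ x)) ^ 2 * ∑ x, (ft x - ∑ y, ft y * νt y) ^ 2 * νt x :=
  variance_tilting_comparison_general νt hνt0 hνt1 ψ hψ ft hft0 hft1 ν hν f hf
end

section
/- Let r > 1. For all sufficiently large N there exists ρ₁ > 0 with 1/r² ≤ ρ₁² ≤ 1/r² + r^{-(N+1)} such that ρ₁^{2(N+1)} - ρ₁^{2N} + r^{1-N}ρ₁² - r^{-N-1} = 0. -/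
/-!
Put `u = ρ²`, `a = r⁻²`, `x = r^(1-N)` and `ε = r^(-N-1)`, so that `a x = ε` and `x ε = aᴺ`, and
consider `Q(u) = u^(N+1) - uᴺ + x u - ε`. Then `Q(a) = aᴺ (a - 1) ≤ 0`, while at `b = a + ε = a (1 + x)`
one finds `Q(b) = aᴺ (1 - (1 + x)ᴺ (1 - b))`, which is nonnegative as soon as `N x ≤ b` because
`(1 + x)ᴺ (1 - b) ≤ exp (N x - b)`. Since `N r^(1-N) → 0`, this holds for large `N`, and the
intermediate value theorem gives a root of `Q` in `[a, b]`.
-/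

open Filter Real Set Topology

theorem one_add_pow_mul_one_sub_le_one {x b : ℝ} {N : ℕ} (hx : -1 ≤ x) (hNx : N * x ≤ b) :
    (1 + x) ^ N * (1 - b) ≤ 1 :=
  calc (1 + x) ^ N * (1 - b) ≤ (1 + x) ^ N * exp (-b) := by
        gcongr
        · exact pow_nonneg (by linarith) N
        · linarith [add_one_le_exp (-b)]
    _ ≤ exp x ^ N * exp (-b) := by
        gcongr
        · linarith
        · linarith [add_one_le_exp x]
    _ = exp (N * x - b) := by rw [← exp_nat_mul, ← exp_add, sub_eq_add_neg]
    _ ≤ 1 := exp_le_one_iff.mpr (by linarith)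

section RootInInterval

variable {N : ℕ} {a x ε : ℝ}

theorem pow_succ_sub_pow_add_mul_sub_nonpos (ha₀ : 0 ≤ a) (ha₁ : a ≤ 1) (hax : a * x = ε) :
    a ^ (N + 1) - a ^ N + x * a - ε ≤ 0 := by
  have hQa : a ^ (N + 1) - a ^ N + x * a - ε = a ^ N * (a - 1) := by
    linear_combination hax
  rw [hQa]
  exact mul_nonpos_of_nonneg_of_nonpos (pow_nonneg ha₀ N) (by linarith)

theorem pow_succ_sub_pow_add_mul_sub_nonneg (ha : 0 ≤ a) (hx : 0 ≤ x) (hax : a * x = ε)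
    (hxε : x * ε = a ^ N) (hNx : N * x ≤ a + ε) :
    0 ≤ (a + ε) ^ (N + 1) - (a + ε) ^ N + x * (a + ε) - ε := by
  have hb : a + ε = a * (1 + x) := by rw [← hax]; ring
  have hQb : (a + ε) ^ (N + 1) - (a + ε) ^ N + x * (a + ε) - ε
      = a ^ N * (1 - (1 + x) ^ N * (1 - (a + ε))) := by
    rw [pow_succ, hb, mul_pow]
    linear_combination hxε + (1 + x) * hax
  rw [hQb]
  exact mul_nonneg (pow_nonneg ha N)
    (sub_nonneg.mpr (one_add_pow_mul_one_sub_le_one (by linarith) hNx))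

theorem exists_pow_succ_sub_pow_add_mul_sub_eq_zero (ha₀ : 0 ≤ a) (ha₁ : a ≤ 1) (hx : 0 ≤ x)
    (hax : a * x = ε) (hxε : x * ε = a ^ N) (hNx : N * x ≤ a + ε) :
    ∃ u ∈ Icc a (a + ε), u ^ (N + 1) - u ^ N + x * u - ε = 0 := by
  have hε : 0 ≤ ε := hax ▸ mul_nonneg ha₀ hx
  have hQ : Continuous fun u : ℝ => u ^ (N + 1) - u ^ N + x * u - ε := by fun_prop
  exact intermediate_value_Icc (by linarith) hQ.continuousOn
    ⟨pow_succ_sub_pow_add_mul_sub_nonpos ha₀ ha₁ hax,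
      pow_succ_sub_pow_add_mul_sub_nonneg ha₀ hx hax hxε hNx⟩

end RootInInterval

theorem tendsto_natCast_mul_zpow_one_sub_nhds_zero {r : ℝ} (hr : 1 < r) :
    Tendsto (fun N : ℕ => N * r ^ ((1 : ℤ) - N)) atTop (𝓝 0) := by
  have hr₀ : r ≠ 0 := by positivity
  have h := (tendsto_self_mul_const_pow_of_lt_one (inv_nonneg.mpr (by positivity))
    (inv_lt_one_of_one_lt₀ hr)).const_mul r
  rw [mul_zero] at h
  refine h.congr fun N => ?_
  rw [zpow_sub₀ hr₀, zpow_one, zpow_natCast, inv_pow, div_eq_mul_inv]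
  ring

/-- For r > 1 and all sufficiently large N, there exists ρ₁ > 0 with
1/r² ≤ ρ₁² ≤ 1/r² + r^{-(N+1)} such that
ρ₁^{2(N+1)} - ρ₁^{2N} + r^{1-N}ρ₁² - r^{-N-1} = 0. -/
theorem root_near_inv_r (r : ℝ) (hr : 1 < r) :
    ∃ N₀ : ℕ, ∀ N : ℕ, N₀ ≤ N →
      ∃ ρ : ℝ, 0 < ρ ∧ 1 / r ^ 2 ≤ ρ ^ 2 ∧ ρ ^ 2 ≤ 1 / r ^ 2 + r ^ (-(N : ℤ) - 1) ∧
        ρ ^ (2 * (N + 1)) - ρ ^ (2 * N) + r ^ ((1 : ℤ) - N) * ρ ^ 2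
          - r ^ (-(N : ℤ) - 1) = 0 := by
  have hr₀ : r ≠ 0 := by positivity
  have ha₀ : 0 < 1 / r ^ 2 := by positivity
  have ha₁ : 1 / r ^ 2 ≤ 1 := (div_le_one (by positivity)).mpr (one_le_pow₀ hr.le)
  obtain ⟨N₀, hN₀⟩ := eventually_atTop.mp
    ((tendsto_natCast_mul_zpow_one_sub_nhds_zero hr).eventually (eventually_le_nhds ha₀))
  refine ⟨N₀, fun N hN => ?_⟩
  have hax : 1 / r ^ 2 * r ^ ((1 : ℤ) - N) = r ^ (-(N : ℤ) - 1) := by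
    rw [one_div, ← zpow_natCast, ← zpow_neg, ← zpow_add₀ hr₀]
    congr 1; push_cast; ring
  have hxε : r ^ ((1 : ℤ) - N) * r ^ (-(N : ℤ) - 1) = (1 / r ^ 2) ^ N := by
    rw [one_div, inv_pow, ← pow_mul, ← zpow_natCast, ← zpow_neg, ← zpow_add₀ hr₀]
    congr 1; push_cast; ring
  obtain ⟨u, ⟨hau, hub⟩, hu⟩ := exists_pow_succ_sub_pow_add_mul_sub_eq_zero ha₀.le ha₁
    (zpow_pos (by positivity) _).le hax hxε
    ((hN₀ N hN).trans (le_add_of_nonneg_right (zpow_pos (by positivity) _).le))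
  have hu₀ : 0 ≤ u := ha₀.le.trans hau
  refine ⟨√u, sqrt_pos.mpr (ha₀.trans_le hau), ?_, ?_, ?_⟩
  · rwa [sq_sqrt hu₀]
  · rwa [sq_sqrt hu₀]
  · rwa [pow_mul, pow_mul, sq_sqrt hu₀]
end

section
/- Let N ∈ ℕ, N ≥ 1. The polynomial X^N + X^{N-1} - 1 over ℂ has N distinct roots (it is squarefree). -/
open Polynomial

/-!
At a common root `z` of `P = X ^ (n + 2) + X ^ (n + 1) - 1` and `P'`, the combinations
`(n + 2) P - X P'` and `X P' - (n + 1) P` give `z ^ (n + 1) = n + 2` and `z ^ (n + 2) = -(n + 1)`.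
Dividing, `‖z‖ = (n + 1) / (n + 2) < 1`, which contradicts `‖z‖ ^ (n + 1) = n + 2`.
-/

section CommRing

variable {R : Type*} [CommRing R] (n : ℕ)

theorem X_mul_derivative_sub_mul_X_pow_add_X_pow_sub_one :
    X * derivative (X ^ (n + 2) + X ^ (n + 1) - 1 : R[X]) -
        (n + 1 : R[X]) * (X ^ (n + 2) + X ^ (n + 1) - 1) = X ^ (n + 2) + (n + 1 : R[X]) := by
  simp only [derivative_sub, derivative_add, derivative_X_pow, derivative_one, C_eq_natCast]
  push_cast
  ring

theorem mul_X_pow_add_X_pow_sub_one_sub_X_mul_derivative :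
    (n + 2 : R[X]) * (X ^ (n + 2) + X ^ (n + 1) - 1) -
        X * derivative (X ^ (n + 2) + X ^ (n + 1) - 1 : R[X]) = X ^ (n + 1) - (n + 2 : R[X]) := by
  simp only [derivative_sub, derivative_add, derivative_X_pow, derivative_one, C_eq_natCast]
  push_cast
  ring

variable {n} in
theorem pow_eq_of_isRoot_X_pow_add_X_pow_sub_one_of_isRoot_derivative {z : R}
    (hroot : (X ^ (n + 2) + X ^ (n + 1) - 1 : R[X]).IsRoot z)
    (hroot' : (derivative (X ^ (n + 2) + X ^ (n + 1) - 1 : R[X])).IsRoot z) :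
    z ^ (n + 1) = n + 2 ∧ z ^ (n + 2) = -(n + 1) := by
  have h₁ := congrArg (eval z) (mul_X_pow_add_X_pow_sub_one_sub_X_mul_derivative (R := R) n)
  have h₂ := congrArg (eval z) (X_mul_derivative_sub_mul_X_pow_add_X_pow_sub_one (R := R) n)
  simp only [eval_sub, eval_mul, eval_add, eval_pow, eval_X, eval_natCast, eval_ofNat, eval_one,
    hroot.eq_zero, hroot'.eq_zero, mul_zero, sub_zero] at h₁ h₂
  exact ⟨by linear_combination -h₁, by linear_combination -h₂⟩

end CommRing

theorem not_isRoot_X_pow_add_X_pow_sub_one_and_derivative {𝕜 : Type*} [RCLike 𝕜] (n : ℕ) (z : 𝕜) :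
    ¬ ((X ^ (n + 2) + X ^ (n + 1) - 1 : 𝕜[X]).IsRoot z ∧
      (derivative (X ^ (n + 2) + X ^ (n + 1) - 1 : 𝕜[X])).IsRoot z) := by
  rintro ⟨hroot, hroot'⟩
  obtain ⟨h₁, h₂⟩ := pow_eq_of_isRoot_X_pow_add_X_pow_sub_one_of_isRoot_derivative hroot hroot'
  have hnorm₁ : ‖z‖ ^ (n + 1) = n + 2 := by
    rw [← norm_pow, h₁]
    exact_mod_cast RCLike.norm_natCast (K := 𝕜) (n + 2)
  have hnorm₂ : ‖z‖ * (n + 2) = n + 1 := by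
    rw [← hnorm₁, ← pow_succ', ← norm_pow, h₂, norm_neg]
    exact_mod_cast RCLike.norm_natCast (K := 𝕜) (n + 1)
  have hlt : ‖z‖ < 1 := by nlinarith
  have hle := pow_le_one₀ (norm_nonneg z) hlt.le (n := n + 1)
  linarith

theorem natDegree_X_pow_add_X_pow_sub_one {R : Type*} [CommRing R] [Nontrivial R] (n : ℕ) :
    (X ^ (n + 2) + X ^ (n + 1) - 1 : R[X]).natDegree = n + 2 := by
  compute_degree!

theorem separable_X_pow_add_X_pow_sub_one (n : ℕ) :
    (X ^ (n + 2) + X ^ (n + 1) - 1 : ℂ[X]).Separable := by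
  rw [separable_def, isCoprime_iff_aeval_ne_zero_of_isAlgClosed (k := ℂ) ℂ]
  intro z
  simpa only [coe_aeval_eq_eval, IsRoot.def, not_and_or] using
    not_isRoot_X_pow_add_X_pow_sub_one_and_derivative n z

theorem XN_plus_XNm1_sub_one_squarefree_general (N : ℕ) :
    Squarefree (X ^ N + X ^ (N - 1) - 1 : Polynomial ℂ) ∧
      (X ^ N + X ^ (N - 1) - 1 : Polynomial ℂ).roots.toFinset.card = N := by
  rcases N with _ | _ | n
  · simp -- truncated subtraction: the polynomial is `X ^ 0 + X ^ 0 - 1 = 1`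
  · simp [irreducible_X.squarefree]
  · show Squarefree (X ^ (n + 2) + X ^ (n + 1) - 1 : ℂ[X]) ∧
      (X ^ (n + 2) + X ^ (n + 1) - 1 : ℂ[X]).roots.toFinset.card = n + 2
    have hsep := separable_X_pow_add_X_pow_sub_one n
    refine ⟨hsep.squarefree, ?_⟩
    rw [Multiset.toFinset_card_of_nodup (nodup_roots hsep), IsAlgClosed.card_roots_eq_natDegree,
      natDegree_X_pow_add_X_pow_sub_one]

/-- The polynomial X^N + X^{N-1} - 1 over ℂ is squarefree and has N distinct roots. -/
theorem XN_plus_XNm1_sub_one_squarefree (N : ℕ) (hN : 1 ≤ N) :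
    Squarefree (X ^ N + X ^ (N - 1) - 1 : Polynomial ℂ) ∧
      (X ^ N + X ^ (N - 1) - 1 : Polynomial ℂ).roots.toFinset.card = N :=
  XN_plus_XNm1_sub_one_squarefree_general N
end

section
/- Let c_N be the unique positive real root of x^N + x^{N-1} - 1. Then N(1 - c_N) → ln 2 as N → ∞; equivalently, the first Dirichlet eigenvalue λ₁ = 1 - c_N of the absorbed walk on ℤ_N satisfies λ₁ ~ ln(2)/N. -/
/-!
Writing `n = N - 1`, the root satisfies `c ^ n * (1 + c) = 1`, i.e. `n * (-log c) = log (1 + c)`.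
Since `1 - c ≤ -log c ≤ (1 - c) / c`, the quantity `n * (1 - c)` lies between `c * log (1 + c)`
and `log (1 + c) < log 2`. The upper bound forces `c → 1`, and then both bounds tend to `log 2`.
-/

open Filter Real Topology

section Root

variable {c : ℝ} {n : ℕ}

lemma lt_one_of_pow_mul_one_add_eq_one (hc : 0 < c) (h : c ^ n * (1 + c) = 1) : c < 1 := by
  by_contra! hc1
  have : 1 ≤ c ^ n := one_le_pow₀ hc1
  nlinarith

lemma log_one_add_eq_neg_mul_log (hc : 0 < c) (h : c ^ n * (1 + c) = 1) :
    log (1 + c) = -(n * log c) := by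
  have : log (c ^ n) + log (1 + c) = 0 := by
    rw [← log_mul (pow_pos hc n).ne' (by positivity), h, log_one]
  rw [log_pow] at this
  linarith

lemma mul_one_sub_le_log_one_add (hc : 0 < c) (h : c ^ n * (1 + c) = 1) :
    n * (1 - c) ≤ log (1 + c) := by
  rw [log_one_add_eq_neg_mul_log hc h, ← mul_neg]
  gcongr
  linarith [log_le_sub_one_of_pos hc]

lemma mul_log_one_add_le_mul_one_sub (hc : 0 < c) (h : c ^ n * (1 + c) = 1) :
    c * log (1 + c) ≤ n * (1 - c) := by
  have hlog : c * -log c ≤ 1 - c := by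
    have := one_sub_inv_le_log_of_pos hc
    rw [← mul_le_mul_iff_of_pos_left hc, mul_sub, mul_inv_cancel₀ hc.ne'] at this
    linarith
  rw [log_one_add_eq_neg_mul_log hc h, ← mul_neg, mul_left_comm]
  exact mul_le_mul_of_nonneg_left hlog n.cast_nonneg

lemma mul_one_sub_lt_log_two (hc : 0 < c) (h : c ^ n * (1 + c) = 1) :
    n * (1 - c) < log 2 :=
  (mul_one_sub_le_log_one_add hc h).trans_lt <|
    log_lt_log (by positivity) (by linarith [lt_one_of_pow_mul_one_add_eq_one hc h])

end Root

section Asymptotics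

variable {c : ℕ → ℝ}

lemma tendsto_one_of_pow_mul_one_add_eq_one
    (h : ∀ᶠ n in atTop, 0 < c n ∧ c n ^ n * (1 + c n) = 1) : Tendsto c atTop (𝓝 1) := by
  have hlower : Tendsto (fun n : ℕ => 1 - log 2 / n) atTop (𝓝 1) := by
    simpa using tendsto_const_nhds.sub (tendsto_const_div_atTop_nhds_zero_nat (log 2))
  refine tendsto_of_tendsto_of_tendsto_of_le_of_le' hlower tendsto_const_nhds ?_ ?_
  · filter_upwards [h, eventually_gt_atTop 0] with n ⟨hc, hroot⟩ hn
    have hn' : (0 : ℝ) < n := by exact_mod_cast hn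
    have := mul_one_sub_lt_log_two hc hroot
    rw [sub_le_comm, le_div_iff₀ hn', mul_comm]
    exact this.le
  · filter_upwards [h] with n ⟨hc, hroot⟩
    exact (lt_one_of_pow_mul_one_add_eq_one hc hroot).le

lemma tendsto_mul_one_sub_of_pow_mul_one_add_eq_one
    (h : ∀ᶠ n in atTop, 0 < c n ∧ c n ^ n * (1 + c n) = 1) :
    Tendsto (fun n : ℕ => n * (1 - c n)) atTop (𝓝 (log 2)) := by
  have hc := tendsto_one_of_pow_mul_one_add_eq_one h
  have hlog : Tendsto (fun n => log (1 + c n)) atTop (𝓝 (log 2)) := by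
    have := (tendsto_const_nhds (x := (1 : ℝ))).add hc
    norm_num at this
    exact ((continuousAt_log two_ne_zero).tendsto).comp this
  refine tendsto_of_tendsto_of_tendsto_of_le_of_le' (by simpa using hc.mul hlog) hlog ?_ ?_
  · filter_upwards [h] with n ⟨hpos, hroot⟩ using mul_log_one_add_le_mul_one_sub hpos hroot
  · filter_upwards [h] with n ⟨hpos, hroot⟩ using mul_one_sub_le_log_one_add hpos hroot

end Asymptotics

/-- If c_N is the positive real root of x^N + x^{N-1} - 1 = 0, then
N(1 - c_N) → ln 2 as N → ∞, i.e. λ₁ = 1 - c_N ~ ln(2)/N. -/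
theorem asymptotics_of_positive_root (c : ℕ → ℝ)
    (hc : ∀ N : ℕ, 2 ≤ N → 0 < c N ∧ (c N) ^ N + (c N) ^ (N - 1) = 1) :
    Filter.Tendsto (fun N : ℕ => (N : ℝ) * (1 - c N)) Filter.atTop
      (nhds (Real.log 2)) := by
  rw [← tendsto_add_atTop_iff_nat 1]
  have hroot : ∀ᶠ n in atTop, 0 < c (n + 1) ∧ c (n + 1) ^ n * (1 + c (n + 1)) = 1 := by
    filter_upwards [eventually_ge_atTop 1] with n hn
    obtain ⟨hpos, hsum⟩ := hc (n + 1) (by omega)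
    refine ⟨hpos, ?_⟩
    rw [Nat.add_sub_cancel, pow_succ] at hsum
    linarith
  have hlim := (tendsto_mul_one_sub_of_pow_mul_one_add_eq_one hroot).add
    ((tendsto_one_of_pow_mul_one_add_eq_one hroot).const_sub 1)
  simp only [sub_self, add_zero] at hlim
  refine hlim.congr fun n => ?_
  push_cast
  ring
end
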